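/- arXiv:1906.08800 — 4 statements merged into one kernel-verified Lean document; each statement's English description precedes it below -/
import Mathlib

section
/- A real two-qubit Hamiltonian H = Σ_{k,l ∈ {I,X,Z}} a_{kl} σ_k ⊗ σ_l + a_{YY} σ_Y ⊗ σ_Y has all off-diagonal entries non-positive in the computational basis if and only if a_{XX} ≤ -|a_{YY}|, a_{IX} ≤ -|a_{ZX}|, and a_{XI} ≤ -|a_{XZ}|. -/
open Matrix Kronecker

noncomputable def σI : Matrix (Fin 2) (Fin 2) ℂ := 1
noncomputable def σX : Matrix (Fin 2) (Fin 2) ℂ := !![0, 1; 1, 0]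
noncomputable def σY : Matrix (Fin 2) (Fin 2) ℂ := !![0, -Complex.I; Complex.I, 0]
noncomputable def σZ : Matrix (Fin 2) (Fin 2) ℂ := !![1, 0; 0, -1]

/-- A real two-qubit Hamiltonian
`H = ∑_{k,l ∈ {I,X,Z}} a_{kl} σ_k ⊗ σ_l + a_{YY} σ_Y ⊗ σ_Y`
has all off-diagonal entries non-positive in the computational basis iff
`a_{XX} ≤ -|a_{YY}|`, `a_{IX} ≤ -|a_{ZX}|`, and `a_{XI} ≤ -|a_{XZ}|`. -/
theorem stmt1 (aII aIX aIZ aXI aXX aXZ aZI aZX aZZ aYY : ℝ)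
    (H : Matrix (Fin 2 × Fin 2) (Fin 2 × Fin 2) ℂ)
    (hH : H = (aII : ℂ) • (σI ⊗ₖ σI) + (aIX : ℂ) • (σI ⊗ₖ σX) + (aIZ : ℂ) • (σI ⊗ₖ σZ)
            + (aXI : ℂ) • (σX ⊗ₖ σI) + (aXX : ℂ) • (σX ⊗ₖ σX) + (aXZ : ℂ) • (σX ⊗ₖ σZ)
            + (aZI : ℂ) • (σZ ⊗ₖ σI) + (aZX : ℂ) • (σZ ⊗ₖ σX) + (aZZ : ℂ) • (σZ ⊗ₖ σZ)
            + (aYY : ℂ) • (σY ⊗ₖ σY)) :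
    (∀ x y, x ≠ y → (H x y).im = 0 ∧ (H x y).re ≤ 0) ↔
      (aXX ≤ -|aYY| ∧ aIX ≤ -|aZX| ∧ aXI ≤ -|aXZ|) := by
  subst hH
  constructor
  · intro h
    have h1 := (h (0,0) (1,1) (by decide)).2
    have h2 := (h (0,1) (1,0) (by decide)).2
    have h3 := (h (0,0) (0,1) (by decide)).2
    have h4 := (h (1,0) (1,1) (by decide)).2
    have h5 := (h (0,0) (1,0) (by decide)).2
    have h6 := (h (0,1) (1,1) (by decide)).2
    simp [σI, σX, σY, σZ, Matrix.one_apply, Prod.ext_iff, Complex.add_re, Complex.I] at h1 h2 h3 h4 h5 h6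
    refine ⟨?_, ?_, ?_⟩ <;> rw [le_neg, abs_le] <;> constructor <;> linarith
  · rintro ⟨h1, h2, h3⟩ x y hxy
    rw [le_neg, abs_le] at h1 h2 h3
    obtain ⟨x1, x2⟩ := x
    obtain ⟨y1, y2⟩ := y
    fin_cases x1 <;> fin_cases x2 <;> fin_cases y1 <;> fin_cases y2 <;>
      simp_all [σI, σX, σY, σZ, Matrix.one_apply, Complex.add_re, Complex.add_im] <;>
      linarith
end

section
/- Let β be a real 3×3 matrix of rank at least 2, and suppose β = O_u Σ O_v^T is a singular value decomposition (O_u, O_v orthogonal, Σ diagonal with non-negative entries). Let (e_1^u, e_2^u, e_3^u) be an orthonormal basis of eigenvectors of β β^T and (e_1^v, e_2^v, e_3^v) an orthonormal basis of eigenvectors of β^T β. Then the following are equivalent: (1) for every i there exists σ_i ∈ ℝ with β e_i^v = ± σ_i e_i^u and β^T e_i^u = ± σ_i e_i^v; (2) the orthogonal operator O_{v←u} := O_v O_u^T satisfies O_{v←u} e_i^u = ± e_i^v for all i. -/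
open Matrix

namespace Stmt2Aux

abbrev V3 := Fin 3 → ℝ
abbrev M3 := Matrix (Fin 3) (Fin 3) ℝ

lemma dp_self_nonneg (v : V3) : 0 ≤ v ⬝ᵥ v :=
  Fintype.sum_nonneg fun i => mul_self_nonneg _

lemma mulVec_dp (A : M3) (x y : V3) : (A *ᵥ x) ⬝ᵥ y = x ⬝ᵥ (Aᵀ *ᵥ y) := by
  rw [← Matrix.vecMul_transpose, ← Matrix.dotProduct_mulVec]

lemma orth_dp {Q : M3} (hQ : Qᵀ * Q = 1) (x y : V3) :
    (Q *ᵥ x) ⬝ᵥ (Q *ᵥ y) = x ⬝ᵥ y := by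
  rw [mulVec_dp, Matrix.mulVec_mulVec, hQ, Matrix.one_mulVec]

lemma diag_quad {S : M3} (hSd : S.IsDiag) (hSn : ∀ i, 0 ≤ S i i) (y : V3) :
    0 ≤ y ⬝ᵥ (S *ᵥ y) := by
  have h01 : S 0 1 = 0 := hSd (by decide)
  have h02 : S 0 2 = 0 := hSd (by decide)
  have h10 : S 1 0 = 0 := hSd (by decide)
  have h12 : S 1 2 = 0 := hSd (by decide)
  have h20 : S 2 0 = 0 := hSd (by decide)
  have h21 : S 2 1 = 0 := hSd (by decide)
  simp only [dotProduct, Matrix.mulVec, Fin.sum_univ_three, h01, h02, h10, h12, h20, h21]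
  have := hSn 0; have := hSn 1; have := hSn 2
  nlinarith [sq_nonneg (y 0), sq_nonneg (y 1), sq_nonneg (y 2)]

lemma diag_symm {S : M3} (hSd : S.IsDiag) : Sᵀ = S := by
  ext i j
  by_cases h : i = j
  · subst h; rfl
  · rw [Matrix.transpose_apply, hSd h, hSd (Ne.symm h)]

lemma psd_quad {O S : M3} (hO : Oᵀ * O = 1) (hSd : S.IsDiag) (hSn : ∀ i, 0 ≤ S i i)
    (x : V3) : 0 ≤ x ⬝ᵥ ((O * S * Oᵀ) *ᵥ x) := by
  have h : (Oᵀ *ᵥ x) ⬝ᵥ (S *ᵥ (Oᵀ *ᵥ x)) = x ⬝ᵥ ((O * S * Oᵀ) *ᵥ x) := by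
    rw [mulVec_dp, Matrix.transpose_transpose, Matrix.mulVec_mulVec, Matrix.mulVec_mulVec]
  rw [← h]
  exact diag_quad hSd hSn _

lemma psd_symm {O S : M3} (hSd : S.IsDiag) : (O * S * Oᵀ)ᵀ = O * S * Oᵀ := by
  rw [Matrix.transpose_mul, Matrix.transpose_mul, Matrix.transpose_transpose,
    diag_symm hSd, Matrix.mul_assoc]

lemma sqrt_eigen {O S : M3} (hO : Oᵀ * O = 1) (hSd : S.IsDiag) (hSn : ∀ i, 0 ≤ S i i)
    (v : V3) (μ : ℝ) (hv : ((O * S * Oᵀ) * (O * S * Oᵀ)) *ᵥ v = μ • v)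
    (hvn : v ⬝ᵥ v = 1) :
    ∃ s : ℝ, 0 ≤ s ∧ (O * S * Oᵀ) *ᵥ v = s • v ∧ s ^ 2 = μ := by
  set P := O * S * Oᵀ with hP
  have hPsymm : Pᵀ = P := psd_symm hSd
  have hμ : 0 ≤ μ := by
    have h1 : (P *ᵥ v) ⬝ᵥ (P *ᵥ v) = μ := by
      rw [mulVec_dp, hPsymm, Matrix.mulVec_mulVec, hv, dotProduct_smul,
        hvn, smul_eq_mul, mul_one]
    rw [← h1]
    exact dp_self_nonneg _
  rcases eq_or_lt_of_le hμ with hμ0 | hμpos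
  · refine ⟨0, le_refl 0, ?_, by simp [← hμ0]⟩
    have h2 : (P *ᵥ v) ⬝ᵥ (P *ᵥ v) = 0 := by
      rw [mulVec_dp, hPsymm, Matrix.mulVec_mulVec, hv, ← hμ0]
      simp
    have := dotProduct_self_eq_zero.mp h2
    simp [this]
  · set s := Real.sqrt μ with hs
    have hs0 : 0 < s := Real.sqrt_pos.mpr hμpos
    have hs2 : s ^ 2 = μ := Real.sq_sqrt hμ
    set w := P *ᵥ v - s • v with hw
    have key : P *ᵥ w + s • w = 0 := by
      rw [hw, Matrix.mulVec_sub, Matrix.mulVec_smul, Matrix.mulVec_mulVec, hv]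
      have : μ = s * s := by rw [← hs2]; ring
      rw [this]
      module
    have hww : w ⬝ᵥ w = 0 := by
      have h3 : w ⬝ᵥ (P *ᵥ w + s • w) = 0 := by rw [key, dotProduct_zero]
      rw [dotProduct_add, dotProduct_smul, smul_eq_mul] at h3
      have h4 : 0 ≤ w ⬝ᵥ (P *ᵥ w) := psd_quad hO hSd hSn w
      have h5 : 0 ≤ w ⬝ᵥ w := dp_self_nonneg w
      nlinarith
    have hw0 : w = 0 := dotProduct_self_eq_zero.mp hww
    exact ⟨s, hs0.le, by rwa [hw, sub_eq_zero] at hw0, hs2⟩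

lemma unit_eq_smul {x y : V3} {c : ℝ} (hx : x ⬝ᵥ x = 1) (hy : y ⬝ᵥ y = 1)
    (hxy : x ⬝ᵥ y = c) (hc : c * c = 1) : x = c • y := by
  have h : (x - c • y) ⬝ᵥ (x - c • y) = 0 := by
    simp only [dotProduct_sub, sub_dotProduct, dotProduct_smul,
      smul_dotProduct, smul_eq_mul, dotProduct_comm y x, hx, hy, hxy]
    nlinarith
  have := dotProduct_self_eq_zero.mp h
  rwa [sub_eq_zero] at this

lemma ker_le_one {β : M3} (hrank : 2 ≤ β.rank) {x v : V3}
    (hx : β *ᵥ x = 0) (hv : β *ᵥ v = 0) (hvn : v ⬝ᵥ v = 1) :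
    ∃ c : ℝ, x = c • v := by
  have hdim : Module.finrank ℝ (LinearMap.ker β.mulVecLin) ≤ 1 := by
    have h := LinearMap.finrank_range_add_finrank_ker β.mulVecLin
    have h3 : Module.finrank ℝ (Fin 3 → ℝ) = 3 := by simp
    rw [h3] at h
    have hr : β.rank = Module.finrank ℝ (LinearMap.range β.mulVecLin) := rfl
    omega
  obtain ⟨v₀, hv₀⟩ := finrank_le_one_iff.mp hdim
  have hvm : v ∈ LinearMap.ker β.mulVecLin := by
    rw [LinearMap.mem_ker, Matrix.mulVecLin_apply]; exact hv
  have hxm : x ∈ LinearMap.ker β.mulVecLin := by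
    rw [LinearMap.mem_ker, Matrix.mulVecLin_apply]; exact hx
  obtain ⟨a, ha⟩ := hv₀ ⟨v, hvm⟩
  obtain ⟨b, hb⟩ := hv₀ ⟨x, hxm⟩
  have ha' : a • (v₀ : V3) = v := congrArg Subtype.val ha
  have hb' : b • (v₀ : V3) = x := congrArg Subtype.val hb
  have hane : a ≠ 0 := by
    intro h0
    rw [h0, zero_smul] at ha'
    rw [← ha'] at hvn
    simp [dotProduct] at hvn
  refine ⟨b / a, ?_⟩
  rw [← hb', ← ha', smul_smul]
  congr 1
  field_simp


lemma svd_facts {β Ou' Ov' S' : M3}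
    (hOu : Ou'ᵀ * Ou' = 1) (hOv : Ov'ᵀ * Ov' = 1) (hSd : S'.IsDiag)
    (hSVD : β = Ou' * S' * Ov'ᵀ) :
    (Ov' * Ou'ᵀ)ᵀ * (Ov' * Ou'ᵀ) = 1 ∧
    βᵀ = (Ov' * S' * Ov'ᵀ) * (Ov' * Ou'ᵀ) ∧
    β = (Ov' * Ou'ᵀ)ᵀ * (Ov' * S' * Ov'ᵀ) ∧
    βᵀ * β = (Ov' * S' * Ov'ᵀ) * (Ov' * S' * Ov'ᵀ) := by
  have hOu2 : Ou' * Ou'ᵀ = 1 := mul_eq_one_comm.mp hOu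
  have hOv2 : Ov' * Ov'ᵀ = 1 := mul_eq_one_comm.mp hOv
  have hQ : (Ov' * Ou'ᵀ)ᵀ * (Ov' * Ou'ᵀ) = 1 := by
    rw [Matrix.transpose_mul, Matrix.transpose_transpose]
    calc Ou' * Ov'ᵀ * (Ov' * Ou'ᵀ) = Ou' * (Ov'ᵀ * Ov') * Ou'ᵀ := by
          rw [Matrix.mul_assoc, Matrix.mul_assoc, Matrix.mul_assoc]
      _ = 1 := by rw [hOv, Matrix.mul_one, hOu2]
  have e1 : Ov'ᵀ * (Ov' * Ou'ᵀ) = Ou'ᵀ := by rw [← Matrix.mul_assoc, hOv, Matrix.one_mul]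
  have hβt : βᵀ = (Ov' * S' * Ov'ᵀ) * (Ov' * Ou'ᵀ) := by
    rw [Matrix.mul_assoc (Ov' * S'), e1, hSVD, Matrix.transpose_mul, Matrix.transpose_mul,
      Matrix.transpose_transpose, diag_symm hSd, ← Matrix.mul_assoc]
  have hβ' : β = (Ov' * Ou'ᵀ)ᵀ * (Ov' * S' * Ov'ᵀ) := by
    have h := congrArg Matrix.transpose hβt
    rw [Matrix.transpose_transpose, Matrix.transpose_mul, psd_symm hSd] at h
    exact h
  refine ⟨hQ, hβt, hβ', ?_⟩
  have e2 : (Ov' * Ou'ᵀ) * ((Ov' * Ou'ᵀ)ᵀ * (Ov' * S' * Ov'ᵀ)) = Ov' * S' * Ov'ᵀ := by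
    rw [← Matrix.mul_assoc, mul_eq_one_comm.mp hQ, Matrix.one_mul]
  calc βᵀ * β
      = (Ov' * S' * Ov'ᵀ) * (Ov' * Ou'ᵀ) * ((Ov' * Ou'ᵀ)ᵀ * (Ov' * S' * Ov'ᵀ)) := by
        rw [← hβt, ← hβ']
    _ = (Ov' * S' * Ov'ᵀ) * ((Ov' * Ou'ᵀ) * ((Ov' * Ou'ᵀ)ᵀ * (Ov' * S' * Ov'ᵀ))) := by
        rw [Matrix.mul_assoc]
    _ = (Ov' * S' * Ov'ᵀ) * (Ov' * S' * Ov'ᵀ) := by rw [e2]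

lemma forward_core {β Ou' Ov' S' : M3} (hrank : 2 ≤ β.rank)
    (hOu : Ou'ᵀ * Ou' = 1) (hOv : Ov'ᵀ * Ov' = 1) (hSd : S'.IsDiag) (hSn : ∀ i, 0 ≤ S' i i)
    (hSVD : β = Ou' * S' * Ov'ᵀ)
    {u v : V3} (hu : u ⬝ᵥ u = 1) (hv : v ⬝ᵥ v = 1) {σ : ℝ}
    (h1 : β *ᵥ v = σ • u ∨ β *ᵥ v = -(σ • u))
    (h2 : βᵀ *ᵥ u = σ • v ∨ βᵀ *ᵥ u = -(σ • v)) :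
    (Ov' * Ou'ᵀ) *ᵥ u = v ∨ (Ov' * Ou'ᵀ) *ᵥ u = -v := by
  obtain ⟨hQ, hβt, hβ, hPP⟩ := svd_facts hOu hOv hSd hSVD
  set Q := Ov' * Ou'ᵀ with hQdef
  set P := Ov' * S' * Ov'ᵀ with hPdef
  obtain ⟨ε, hε, h1'⟩ : ∃ ε : ℝ, ε * ε = 1 ∧ β *ᵥ v = (ε * σ) • u := by
    rcases h1 with h | h
    · exact ⟨1, by norm_num, by rw [h, one_mul]⟩
    · exact ⟨-1, by norm_num, by rw [h, neg_one_mul, neg_smul]⟩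
  obtain ⟨δ, hδ, h2'⟩ : ∃ δ : ℝ, δ * δ = 1 ∧ βᵀ *ᵥ u = (δ * σ) • v := by
    rcases h2 with h | h
    · exact ⟨1, by norm_num, by rw [h, one_mul]⟩
    · exact ⟨-1, by norm_num, by rw [h, neg_one_mul, neg_smul]⟩
  set x := Q *ᵥ u with hxdef
  have hxx : x ⬝ᵥ x = 1 := by rw [hxdef, orth_dp hQ, hu]
  have hPx : P *ᵥ x = (δ * σ) • v := by
    rw [hxdef, Matrix.mulVec_mulVec, ← hβt, h2']
  rcases eq_or_ne σ 0 with hσ | hσ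
  · have hβx : β *ᵥ x = 0 := by
      rw [hβ, ← Matrix.mulVec_mulVec, hPx, Matrix.mulVec_smul, hσ]
      simp
    have hβv : β *ᵥ v = 0 := by rw [h1', hσ]; simp
    obtain ⟨c, hc⟩ := ker_le_one hrank hβx hβv hv
    have hc2 : c * c = 1 := by
      have h5 : x ⬝ᵥ x = c * c * (v ⬝ᵥ v) := by
        rw [hc, smul_dotProduct, dotProduct_smul, smul_eq_mul, smul_eq_mul]
        ring
      rw [hxx, hv, mul_one] at h5
      linarith
    rcases mul_self_eq_one_iff.mp hc2 with h | h
    · left; rw [hc, h, one_smul]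
    · right; rw [hc, h, neg_one_smul]
  · have hPPv : (P * P) *ᵥ v = (ε * δ * σ ^ 2) • v := by
      rw [← hPP, ← Matrix.mulVec_mulVec, h1', Matrix.mulVec_smul, h2', smul_smul]
      congr 1
      ring
    obtain ⟨s, hs0, hPv, hs2⟩ := sqrt_eigen hOv hSd hSn v _ hPPv hv
    rw [← hPdef] at hPv
    have hss : 0 ≤ ε * δ * σ ^ 2 := by rw [← hs2]; exact sq_nonneg s
    have hσ2 : 0 < σ ^ 2 := sq_pos_of_ne_zero hσ
    have hεδ : ε * δ = 1 := by
      rcases mul_self_eq_one_iff.mp hε with h | h <;>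
        rcases mul_self_eq_one_iff.mp hδ with h' | h' <;>
        rw [h, h'] at hss ⊢ <;> norm_num at hss ⊢ <;> nlinarith [hσ2]
    have hs2' : s ^ 2 = σ ^ 2 := by rw [hs2, hεδ, one_mul]
    have hspos : 0 < s := by
      rcases eq_or_lt_of_le hs0 with h | h
      · exfalso
        rw [← h] at hs2'
        have : σ ^ 2 = 0 := by simpa using hs2'.symm
        exact hσ (by simpa using pow_eq_zero_iff (n := 2) (by norm_num) |>.mp this)
      · exact h
    set c := x ⬝ᵥ v with hcdef
    have hsc : s * c = δ * σ := by
      have h3 : (P *ᵥ x) ⬝ᵥ v = x ⬝ᵥ (P *ᵥ v) := by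
        rw [mulVec_dp P, psd_symm hSd]
      rw [hPv, hPx, dotProduct_smul, smul_dotProduct, smul_eq_mul,
        smul_eq_mul, hv, mul_one, ← hcdef] at h3
      exact h3.symm
    have h4 : (s * c) * (s * c) = (δ * σ) * (δ * σ) := by rw [hsc]
    have h5 : σ ^ 2 * (c * c) = σ ^ 2 := by
      calc σ ^ 2 * (c * c) = s ^ 2 * (c * c) := by rw [hs2']
        _ = (s * c) * (s * c) := by ring
        _ = (δ * σ) * (δ * σ) := by rw [hsc]
        _ = (δ * δ) * σ ^ 2 := by ring
        _ = σ ^ 2 := by rw [hδ, one_mul]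
    have hc2 : c * c = 1 :=
      mul_left_cancel₀ (ne_of_gt hσ2) (h5.trans (mul_one (σ ^ 2)).symm)
    have hxc : x = c • v := unit_eq_smul hxx hv hcdef.symm hc2
    rcases mul_self_eq_one_iff.mp hc2 with h | h
    · left; rw [hxc, h, one_smul]
    · right; rw [hxc, h, neg_one_smul]

end Stmt2Aux


open Stmt2Aux

/-- Lemma on rank > 1 edges:  Let `β` be a real 3×3 matrix of rank
at least 2, with singular-value decomposition `β = Oᵤ Σ Oᵥᵀ`, and let `(eu i)` be
an orthonormal basis of eigenvectors of `β βᵀ` and `(ev i)` an orthonormal basis of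
eigenvectors of `βᵀ β`.  Then the pairing condition
`∀ i, ∃ σᵢ, β (ev i) = ± σᵢ (eu i) ∧ βᵀ (eu i) = ± σᵢ (ev i)`
holds iff for every singular value decomposition `β = Ou' S' Ov'ᵀ`, the orthogonal
operator `O_{v←u} = Ov' Ou'ᵀ` satisfies `O_{v←u} (eu i) = ± ev i` for all `i`. -/
theorem stmt2 (β Ou Ov S0 : Matrix (Fin 3) (Fin 3) ℝ)
    (hrank : 2 ≤ β.rank)
    (hOu : Ouᵀ * Ou = 1) (hOv : Ovᵀ * Ov = 1)
    (hSdiag : S0.IsDiag) (hSnonneg : ∀ i, 0 ≤ S0 i i)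
    (hSVD : β = Ou * S0 * Ovᵀ)
    (eu ev : Fin 3 → Fin 3 → ℝ)
    (heu_eig : ∀ i, ∃ μ : ℝ, (β * βᵀ).mulVec (eu i) = μ • eu i)
    (hev_eig : ∀ i, ∃ μ : ℝ, (βᵀ * β).mulVec (ev i) = μ • ev i)
    (heu_on : ∀ i j, eu i ⬝ᵥ eu j = if i = j then 1 else 0)
    (hev_on : ∀ i j, ev i ⬝ᵥ ev j = if i = j then 1 else 0) :
    (∀ i, ∃ σ : ℝ,
        (β.mulVec (ev i) = σ • eu i ∨ β.mulVec (ev i) = -(σ • eu i)) ∧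
        (βᵀ.mulVec (eu i) = σ • ev i ∨ βᵀ.mulVec (eu i) = -(σ • ev i))) ↔
    (∀ Ou' Ov' S' : Matrix (Fin 3) (Fin 3) ℝ,
        Ou'ᵀ * Ou' = 1 → Ov'ᵀ * Ov' = 1 → S'.IsDiag → (∀ i, 0 ≤ S' i i) →
        β = Ou' * S' * Ov'ᵀ →
        ∀ i, (Ov' * Ou'ᵀ).mulVec (eu i) = ev i ∨
             (Ov' * Ou'ᵀ).mulVec (eu i) = -(ev i)) := by
  constructor
  · intro hpair Ou' Ov' S' hOu' hOv' hSd' hSn' hSVD' i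
    obtain ⟨σ, h1, h2⟩ := hpair i
    have hu : eu i ⬝ᵥ eu i = 1 := by simpa using heu_on i i
    have hv : ev i ⬝ᵥ ev i = 1 := by simpa using hev_on i i
    exact forward_core hrank hOu' hOv' hSd' hSn' hSVD' hu hv h1 h2
  · intro H i
    have hQi := H Ou Ov S0 hOu hOv hSdiag hSnonneg hSVD i
    obtain ⟨hQ1, hβt, hβ, hPP⟩ := svd_facts hOu hOv hSdiag hSVD
    obtain ⟨μ, hμ⟩ := hev_eig i
    have hv : ev i ⬝ᵥ ev i = 1 := by simpa using hev_on i i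
    rw [hPP] at hμ
    obtain ⟨s, hs0, hPv, -⟩ := sqrt_eigen hOv hSdiag hSnonneg (ev i) μ hμ hv
    refine ⟨s, ?_, ?_⟩
    · have h6 : β *ᵥ ev i = s • ((Ov * Ouᵀ)ᵀ *ᵥ ev i) := by
        rw [hβ, ← Matrix.mulVec_mulVec, hPv, Matrix.mulVec_smul]
      rcases hQi with h | h
      · left
        rw [h6, ← h, Matrix.mulVec_mulVec, hQ1, Matrix.one_mulVec]
      · right
        have h7 : (Ov * Ouᵀ)ᵀ *ᵥ ev i = -(eu i) := by
          have h' : ev i = -((Ov * Ouᵀ) *ᵥ eu i) := by rw [h, neg_neg]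
          rw [h', Matrix.mulVec_neg, Matrix.mulVec_mulVec, hQ1, Matrix.one_mulVec]
        rw [h6, h7, smul_neg]
    · have h8 : βᵀ *ᵥ eu i = (Ov * S0 * Ovᵀ) *ᵥ ((Ov * Ouᵀ) *ᵥ eu i) := by
        rw [hβt, ← Matrix.mulVec_mulVec]
      rcases hQi with h | h
      · left; rw [h8, h, hPv]
      · right; rw [h8, h, Matrix.mulVec_neg, hPv]
end

section
/- The two-qubit Hamiltonian H = -Z⊗Z - 2 X⊗X + 3 Y⊗Y + I⊗X + I⊗Z + Z⊗I + X⊗I cannot be transformed into a symmetric Z-matrix (real matrix with non-positive off-diagonal entries) by any transformation of the form (U₁ ⊗ U₂) H (U₁ ⊗ U₂)† with U₁, U₂ ∈ SU(2). -/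
open Matrix Kronecker

/-- A symmetric Z-matrix: real, symmetric, with non-positive off-diagonal entries. -/
def IsSymZ {ι : Type*} [DecidableEq ι] (M : Matrix ι ι ℂ) : Prop :=
  Mᵀ = M ∧ (∀ x y, (M x y).im = 0) ∧ (∀ x y, x ≠ y → (M x y).re ≤ 0)

namespace Stmt6Aux

abbrev M2 := Matrix (Fin 2) (Fin 2) ℂ
abbrev M4 := Matrix (Fin 2 × Fin 2) (Fin 2 × Fin 2) ℂ

lemma σX_herm : σXᴴ = σX := by
  ext i j; fin_cases i <;> fin_cases j <;> simp [σX, Matrix.conjTranspose_apply]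
lemma σY_herm : σYᴴ = σY := by
  ext i j; fin_cases i <;> fin_cases j <;> simp [σY, Matrix.conjTranspose_apply]
lemma σZ_herm : σZᴴ = σZ := by
  ext i j; fin_cases i <;> fin_cases j <;> simp [σZ, Matrix.conjTranspose_apply]
lemma R_herm : (σX + σZ)ᴴ = σX + σZ := by
  rw [Matrix.conjTranspose_add, σX_herm, σZ_herm]
lemma σX_sq : σX * σX = 1 := by
  ext i j; fin_cases i <;> fin_cases j <;>
    simp [σX, Matrix.mul_apply, Fin.sum_univ_two, Matrix.one_apply]
lemma σY_sq : σY * σY = 1 := by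
  ext i j; fin_cases i <;> fin_cases j <;>
    simp [σY, Matrix.mul_apply, Fin.sum_univ_two, Matrix.one_apply]
lemma σX_tr : Matrix.trace σX = 0 := by simp [σX, Matrix.trace_fin_two]
lemma σY_tr : Matrix.trace σY = 0 := by simp [σY, Matrix.trace_fin_two]
lemma trace_YX : Matrix.trace (σY * σX) = 0 := by
  simp [σX, σY, Matrix.trace_fin_two, Matrix.mul_apply, Fin.sum_univ_two]

lemma kron_conjT (A B : M2) : (A ⊗ₖ B)ᴴ = Aᴴ ⊗ₖ Bᴴ := by
  ext ⟨i,j⟩ ⟨k,l⟩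
  simp [Matrix.conjTranspose_apply, Matrix.kroneckerMap_apply, star_mul', mul_comm]

lemma key_trace (u v : M2) (Hm : M4) (P Q : M2) :
    Matrix.trace ((u ⊗ₖ v) * Hm * (u ⊗ₖ v)ᴴ * (P ⊗ₖ Q)) =
    Matrix.trace (Hm * ((uᴴ * P * u) ⊗ₖ (vᴴ * Q * v))) := by
  rw [kron_conjT]
  have h1 : (uᴴ ⊗ₖ vᴴ) * (P ⊗ₖ Q) * (u ⊗ₖ v) = (uᴴ * P * u) ⊗ₖ (vᴴ * Q * v) := by
    rw [Matrix.mul_kronecker_mul, Matrix.mul_kronecker_mul]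
  calc Matrix.trace ((u ⊗ₖ v) * Hm * (uᴴ ⊗ₖ vᴴ) * (P ⊗ₖ Q))
      = Matrix.trace ((u ⊗ₖ v) * (Hm * ((uᴴ ⊗ₖ vᴴ) * (P ⊗ₖ Q)))) := by
        simp only [mul_assoc]
    _ = Matrix.trace ((Hm * ((uᴴ ⊗ₖ vᴴ) * (P ⊗ₖ Q))) * (u ⊗ₖ v)) := Matrix.trace_mul_comm _ _
    _ = Matrix.trace (Hm * ((uᴴ ⊗ₖ vᴴ) * (P ⊗ₖ Q) * (u ⊗ₖ v))) := by simp only [mul_assoc]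
    _ = _ := by rw [h1]

lemma traceHAB (A B : M2) :
    Matrix.trace ((-(σZ ⊗ₖ σZ) - (2 : ℂ) • (σX ⊗ₖ σX) + (3 : ℂ) • (σY ⊗ₖ σY)
      + ((1 : M2) ⊗ₖ σX) + ((1 : M2) ⊗ₖ σZ) + (σZ ⊗ₖ (1 : M2)) + (σX ⊗ₖ (1 : M2))) * (A ⊗ₖ B)) =
    -((A 0 0 - A 1 1) * (B 0 0 - B 1 1)) - 2 * ((A 0 1 + A 1 0) * (B 0 1 + B 1 0))
      - 3 * ((A 0 1 - A 1 0) * (B 0 1 - B 1 0)) + (A 0 0 + A 1 1) * (B 0 1 + B 1 0)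
      + (A 0 0 + A 1 1) * (B 0 0 - B 1 1) + (A 0 0 - A 1 1) * (B 0 0 + B 1 1)
      + (A 0 1 + A 1 0) * (B 0 0 + B 1 1) := by
  simp only [Matrix.trace, Matrix.diag_apply, Matrix.mul_apply, Fintype.sum_prod_type,
    Fin.sum_univ_two, Matrix.add_apply, Matrix.sub_apply, Matrix.neg_apply, Matrix.smul_apply,
    Matrix.kroneckerMap_apply, Matrix.one_fin_two, σX, σY, σZ, Matrix.of_apply,
    Matrix.cons_val', Matrix.cons_val_zero, Matrix.cons_val_one, Matrix.head_cons,
    Matrix.empty_val', Matrix.cons_val_fin_one, Matrix.head_fin_const, smul_eq_mul]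
  linear_combination (3 * (A 0 1 - A 1 0) * (B 0 1 - B 1 0)) * Complex.I_sq

lemma main_trace (u v P Q : M2) :
    Matrix.trace ((u ⊗ₖ v) * (-(σZ ⊗ₖ σZ) - (2 : ℂ) • (σX ⊗ₖ σX) + (3 : ℂ) • (σY ⊗ₖ σY)
      + ((1 : M2) ⊗ₖ σX) + ((1 : M2) ⊗ₖ σZ) + (σZ ⊗ₖ (1 : M2)) + (σX ⊗ₖ (1 : M2)))
      * (u ⊗ₖ v)ᴴ * (P ⊗ₖ Q)) =
    -(((uᴴ * P * u) 0 0 - (uᴴ * P * u) 1 1) * ((vᴴ * Q * v) 0 0 - (vᴴ * Q * v) 1 1))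
      - 2 * (((uᴴ * P * u) 0 1 + (uᴴ * P * u) 1 0) * ((vᴴ * Q * v) 0 1 + (vᴴ * Q * v) 1 0))
      - 3 * (((uᴴ * P * u) 0 1 - (uᴴ * P * u) 1 0) * ((vᴴ * Q * v) 0 1 - (vᴴ * Q * v) 1 0))
      + ((uᴴ * P * u) 0 0 + (uᴴ * P * u) 1 1) * ((vᴴ * Q * v) 0 1 + (vᴴ * Q * v) 1 0)
      + ((uᴴ * P * u) 0 0 + (uᴴ * P * u) 1 1) * ((vᴴ * Q * v) 0 0 - (vᴴ * Q * v) 1 1)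
      + ((uᴴ * P * u) 0 0 - (uᴴ * P * u) 1 1) * ((vᴴ * Q * v) 0 0 + (vᴴ * Q * v) 1 1)
      + ((uᴴ * P * u) 0 1 + (uᴴ * P * u) 1 0) * ((vᴴ * Q * v) 0 0 + (vᴴ * Q * v) 1 1) := by
  rw [key_trace, traceHAB]

lemma trace_M_XX (M : M4) :
    Matrix.trace (M * (σX ⊗ₖ σX)) =
      M (0,0) (1,1) + M (0,1) (1,0) + M (1,0) (0,1) + M (1,1) (0,0) := by
  simp only [Matrix.trace, Matrix.diag_apply, Matrix.mul_apply, Fintype.sum_prod_type,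
    Fin.sum_univ_two, Matrix.kroneckerMap_apply, σX, Matrix.of_apply,
    Matrix.cons_val', Matrix.cons_val_zero, Matrix.cons_val_one, Matrix.head_cons,
    Matrix.empty_val', Matrix.cons_val_fin_one, Matrix.head_fin_const]
  ring

lemma trace_M_YY (M : M4) :
    Matrix.trace (M * (σY ⊗ₖ σY)) =
      -M (0,0) (1,1) + M (0,1) (1,0) + M (1,0) (0,1) - M (1,1) (0,0) := by
  simp only [Matrix.trace, Matrix.diag_apply, Matrix.mul_apply, Fintype.sum_prod_type,
    Fin.sum_univ_two, Matrix.kroneckerMap_apply, σY, Matrix.of_apply,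
    Matrix.cons_val', Matrix.cons_val_zero, Matrix.cons_val_one, Matrix.head_cons,
    Matrix.empty_val', Matrix.cons_val_fin_one, Matrix.head_fin_const]
  linear_combination (M (0,0) (1,1) + M (1,1) (0,0) - M (0,1) (1,0) - M (1,0) (0,1)) * Complex.I_sq

lemma re_trace_zero {n : Type*} [Fintype n] (M K : Matrix n n ℂ)
    (hM : ∀ x y, (M x y).im = 0) (hK : ∀ x y, (K x y).re = 0) :
    (Matrix.trace (M * K)).re = 0 := by
  have h : ∀ x y, (M x y * K y x).re = 0 := fun x y => by
    rw [Complex.mul_re, hM, hK]; ring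
  simp [Matrix.trace, Matrix.mul_apply, Complex.re_sum, h]

lemma kron_im_left (N : M2) (hN : ∀ i j, (N i j).im = 0) :
    ∀ x y, ((σY ⊗ₖ N) x y).re = 0 := by
  rintro ⟨i,j⟩ ⟨k,l⟩
  fin_cases i <;> fin_cases k <;>
    simp [σY, Matrix.kroneckerMap_apply, Complex.mul_re, hN]

lemma kron_im_right (N : M2) (hN : ∀ i j, (N i j).im = 0) :
    ∀ x y, ((N ⊗ₖ σY) x y).re = 0 := by
  rintro ⟨i,j⟩ ⟨k,l⟩
  fin_cases j <;> fin_cases l <;>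
    simp [σY, Matrix.kroneckerMap_apply, Complex.mul_re, hN]

lemma one_im : ∀ i j, ((1 : M2) i j).im = 0 := by
  intro i j
  by_cases h : i = j <;> simp [Matrix.one_apply, h]

lemma entries_real (N : M2) (hH : Nᴴ = N) (h01 : (N 0 1).im = 0) :
    ∀ i j, (N i j).im = 0 := by
  have h00 : (starRingEnd ℂ) (N 0 0) = N 0 0 := congrFun (congrFun hH 0) 0
  have h11 : (starRingEnd ℂ) (N 1 1) = N 1 1 := congrFun (congrFun hH 1) 1
  have h10 : (starRingEnd ℂ) (N 0 1) = N 1 0 := congrFun (congrFun hH 1) 0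
  have k00 : (N 0 0).im = 0 := Complex.conj_eq_iff_im.mp h00
  have k11 : (N 1 1).im = 0 := Complex.conj_eq_iff_im.mp h11
  have k10 : (N 1 0).im = 0 := by rw [← h10]; simp [h01]
  intro i j
  fin_cases i <;> fin_cases j <;> assumption

lemma trace_conj_swap (v P Q : M2) :
    Matrix.trace ((v * P * vᴴ) * Q) = Matrix.trace ((vᴴ * Q * v) * P) := by
  rw [Matrix.trace_mul_cycle, Matrix.trace_mul_cycle]
  simp only [mul_assoc]

lemma rot_herm (u P : M2) (hP : Pᴴ = P) : (uᴴ * P * u)ᴴ = uᴴ * P * u := by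
  rw [Matrix.conjTranspose_mul, Matrix.conjTranspose_mul, Matrix.conjTranspose_conjTranspose, hP,
    mul_assoc]

lemma rot_sq (u P : M2) (hu1 : u * uᴴ = 1) (hu2 : uᴴ * u = 1) (hP2 : P * P = 1) :
    (uᴴ * P * u) * (uᴴ * P * u) = 1 := by
  calc (uᴴ * P * u) * (uᴴ * P * u) = uᴴ * (P * (u * uᴴ) * P) * u := by
        simp only [mul_assoc]
    _ = 1 := by rw [hu1, mul_one, hP2, mul_one, hu2]

lemma rot_trace (u P : M2) (hu1 : u * uᴴ = 1) :
    Matrix.trace (uᴴ * P * u) = Matrix.trace P := by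
  rw [Matrix.trace_mul_comm, ← mul_assoc, hu1, one_mul]

lemma rot_trace_mul (u P Q : M2) (hu1 : u * uᴴ = 1) :
    Matrix.trace ((uᴴ * P * u) * (uᴴ * Q * u)) = Matrix.trace (P * Q) := by
  have : (uᴴ * P * u) * (uᴴ * Q * u) = uᴴ * (P * (u * uᴴ) * Q) * u := by
    simp only [mul_assoc]
  rw [this, hu1, mul_one, rot_trace _ _ hu1]

lemma trace2 (P Q : M2) :
    Matrix.trace (P * Q) = P 0 0 * Q 0 0 + P 0 1 * Q 1 0 + P 1 0 * Q 0 1 + P 1 1 * Q 1 1 := by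
  simp only [Matrix.trace_fin_two, Matrix.mul_apply, Fin.sum_univ_two]
  ring

lemma herm_entries (A : M2) (h1 : Aᴴ = A) (h2 : A * A = 1) (h3 : Matrix.trace A = 0) :
    A 1 0 = (starRingEnd ℂ) (A 0 1) ∧ (A 0 0).im = 0 ∧ A 1 1 = -A 0 0 ∧
      A 0 0 * A 0 0 + A 0 1 * A 1 0 = 1 := by
  have e1 : A 1 0 = (starRingEnd ℂ) (A 0 1) := by
    have := congrFun (congrFun h1 1) 0
    rw [Matrix.conjTranspose_apply] at this
    exact this.symm
  have e2 : (A 0 0).im = 0 := by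
    have := congrFun (congrFun h1 0) 0
    rw [Matrix.conjTranspose_apply] at this
    exact Complex.conj_eq_iff_im.mp this
  have e3 : A 1 1 = -A 0 0 := by
    rw [Matrix.trace_fin_two] at h3
    linear_combination h3
  have e4 : A 0 0 * A 0 0 + A 0 1 * A 1 0 = 1 := by
    have := congrFun (congrFun h2 0) 0
    rw [Matrix.mul_apply, Fin.sum_univ_two] at this
    simpa using this
  exact ⟨e1, e2, e3, e4⟩

lemma herm_cast (A : M2) (h1 : Aᴴ = A) (h2 : A * A = 1) (h3 : Matrix.trace A = 0) :
    A 0 0 = (((A 0 0).re : ℝ) : ℂ) ∧ A 1 1 = -(((A 0 0).re : ℝ) : ℂ) ∧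
    A 0 1 = ((A 0 1).re : ℂ) + ((A 0 1).im : ℂ) * Complex.I ∧
    A 1 0 = ((A 0 1).re : ℂ) - ((A 0 1).im : ℂ) * Complex.I ∧
    ((A 0 0).re)^2 + ((A 0 1).re)^2 + ((A 0 1).im)^2 = 1 := by
  obtain ⟨e1, e2, e3, e4⟩ := herm_entries A h1 h2 h3
  have c1 : A 0 0 = (((A 0 0).re : ℝ) : ℂ) := by
    rw [Complex.ext_iff]
    constructor <;> simp [e2]
  have c3 : A 0 1 = ((A 0 1).re : ℂ) + ((A 0 1).im : ℂ) * Complex.I :=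
    (Complex.re_add_im _).symm
  have c4 : A 1 0 = ((A 0 1).re : ℂ) - ((A 0 1).im : ℂ) * Complex.I := by
    rw [e1, Complex.ext_iff]
    constructor <;> simp
  have c2 : A 1 1 = -(((A 0 0).re : ℝ) : ℂ) := by
    rw [e3]; exact congrArg Neg.neg c1
  refine ⟨c1, c2, c3, c4, ?_⟩
  have e4' : (((((A 0 0).re)^2 + ((A 0 1).re)^2 + ((A 0 1).im)^2 : ℝ)) : ℂ) = 1 := by
    rw [c1, c3, c4] at e4
    push_cast
    linear_combination e4 + (((A 0 1).im : ℂ))^2 * Complex.I_sq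
  exact_mod_cast e4'

lemma σY_e00 : σY 0 0 = 0 := by simp [σY]
lemma σY_e01 : σY 0 1 = -Complex.I := by simp [σY]
lemma σY_e10 : σY 1 0 = Complex.I := by simp [σY]
lemma σY_e11 : σY 1 1 = 0 := by simp [σY]
lemma R_e00 : (σX + σZ) 0 0 = 1 := by simp [σX, σZ, Matrix.add_apply]
lemma R_e01 : (σX + σZ) 0 1 = 1 := by simp [σX, σZ, Matrix.add_apply]
lemma R_e10 : (σX + σZ) 1 0 = 1 := by simp [σX, σZ, Matrix.add_apply]
lemma R_e11 : (σX + σZ) 1 1 = -1 := by simp [σX, σZ, Matrix.add_apply]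

lemma key_ineq (cx dx fx gx w z : ℝ) (hd : cx^2 + fx^2 = 1) (he : dx^2 + gx^2 = 1)
    (hw : w ≤ 0) (hz : z ≤ 0) (hwz : w + z ≤ -6)
    (heq : w + z = -2 * (cx * dx) - 4 * (fx * gx)) : False := by
  nlinarith [sq_nonneg (cx - dx), sq_nonneg (fx - gx), sq_nonneg (cx + dx),
    sq_nonneg (fx + gx), sq_nonneg cx, sq_nonneg dx, sq_nonneg fx, sq_nonneg gx]

end Stmt6Aux

open Stmt6Aux in
set_option maxHeartbeats 1000000 in
/-- The two-qubit Hamiltonian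
`H = -Z⊗Z - 2 X⊗X + 3 Y⊗Y + I⊗X + I⊗Z + Z⊗I + X⊗I` cannot be turned into a
symmetric Z-matrix by any conjugation `(U₁ ⊗ U₂) H (U₁ ⊗ U₂)†` with
`U₁, U₂ ∈ SU(2)`. -/
theorem stmt6 (H : Matrix (Fin 2 × Fin 2) (Fin 2 × Fin 2) ℂ)
    (hH : H = -(σZ ⊗ₖ σZ) - (2 : ℂ) • (σX ⊗ₖ σX) + (3 : ℂ) • (σY ⊗ₖ σY)
            + (1 ⊗ₖ σX) + (1 ⊗ₖ σZ) + (σZ ⊗ₖ 1) + (σX ⊗ₖ 1)) :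
    ∀ U₁ U₂ : Matrix.specialUnitaryGroup (Fin 2) ℂ,
      ¬ IsSymZ (((U₁ : Matrix (Fin 2) (Fin 2) ℂ) ⊗ₖ (U₂ : Matrix (Fin 2) (Fin 2) ℂ)) * H *
        ((U₁ : Matrix (Fin 2) (Fin 2) ℂ) ⊗ₖ (U₂ : Matrix (Fin 2) (Fin 2) ℂ))ᴴ) := by
  intro U₁ U₂ hZ
  obtain ⟨hsym, him, hoff⟩ := hZ
  subst hH
  set u : M2 := (U₁ : Matrix (Fin 2) (Fin 2) ℂ) with hu_def
  set v : M2 := (U₂ : Matrix (Fin 2) (Fin 2) ℂ) with hv_def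
  set MM : M4 := (u ⊗ₖ v) * (-(σZ ⊗ₖ σZ) - (2 : ℂ) • (σX ⊗ₖ σX) + (3 : ℂ) • (σY ⊗ₖ σY)
      + ((1 : M2) ⊗ₖ σX) + ((1 : M2) ⊗ₖ σZ) + (σZ ⊗ₖ (1 : M2)) + (σX ⊗ₖ (1 : M2)))
      * (u ⊗ₖ v)ᴴ with hMM
  have hu1 : u * uᴴ = 1 := by
    have h := (Matrix.mem_specialUnitaryGroup_iff.mp U₁.2).1
    rw [Matrix.mem_unitaryGroup_iff, Matrix.star_eq_conjTranspose] at h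
    exact h
  have hu2 : uᴴ * u = 1 := by
    have h := (Matrix.mem_specialUnitaryGroup_iff.mp U₁.2).1
    rw [Matrix.mem_unitaryGroup_iff', Matrix.star_eq_conjTranspose] at h
    exact h
  have hv1 : v * vᴴ = 1 := by
    have h := (Matrix.mem_specialUnitaryGroup_iff.mp U₂.2).1
    rw [Matrix.mem_unitaryGroup_iff, Matrix.star_eq_conjTranspose] at h
    exact h
  have hv2 : vᴴ * v = 1 := by
    have h := (Matrix.mem_specialUnitaryGroup_iff.mp U₂.2).1
    rw [Matrix.mem_unitaryGroup_iff', Matrix.star_eq_conjTranspose] at h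
    exact h
  -- rotated Pauli matrices and their entry structure
  have hAtr : Matrix.trace (uᴴ * σY * u) = 0 := by rw [rot_trace u σY hu1, σY_tr]
  obtain ⟨a1, a2, a3, a4, a5⟩ :=
    herm_cast _ (rot_herm u σY σY_herm) (rot_sq u σY hu1 hu2 σY_sq) hAtr
  set ax := ((uᴴ * σY * u) 0 0).re with hax_def
  set px := ((uᴴ * σY * u) 0 1).re with hpx_def
  set py := ((uᴴ * σY * u) 0 1).im with hpy_def
  have hBtr : Matrix.trace (vᴴ * σY * v) = 0 := by rw [rot_trace v σY hv1, σY_tr]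
  obtain ⟨b1, b2, b3, b4, b5⟩ :=
    herm_cast _ (rot_herm v σY σY_herm) (rot_sq v σY hv1 hv2 σY_sq) hBtr
  set bx := ((vᴴ * σY * v) 0 0).re with hbx_def
  set qx := ((vᴴ * σY * v) 0 1).re with hqx_def
  set qy := ((vᴴ * σY * v) 0 1).im with hqy_def
  have hA'tr : Matrix.trace (uᴴ * σX * u) = 0 := by rw [rot_trace u σX hu1, σX_tr]
  obtain ⟨d1, d2, d3, d4, d5⟩ :=
    herm_cast _ (rot_herm u σX σX_herm) (rot_sq u σX hu1 hu2 σX_sq) hA'tr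
  set cx := ((uᴴ * σX * u) 0 0).re with hcx_def
  set fx := ((uᴴ * σX * u) 0 1).re with hfx_def
  set fy := ((uᴴ * σX * u) 0 1).im with hfy_def
  have hB'tr : Matrix.trace (vᴴ * σX * v) = 0 := by rw [rot_trace v σX hv1, σX_tr]
  obtain ⟨e1, e2, e3, e4, e5⟩ :=
    herm_cast _ (rot_herm v σX σX_herm) (rot_sq v σX hv1 hv2 σX_sq) hB'tr
  set dx := ((vᴴ * σX * v) 0 0).re with hdx_def
  set gx := ((vᴴ * σX * v) 0 1).re with hgx_def
  set gy := ((vᴴ * σX * v) 0 1).im with hgy_def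
  -- collapse lemmas
  have hone_v : vᴴ * (1 : M2) * v = 1 := by rw [mul_one, hv2]
  have hone_u : uᴴ * (1 : M2) * u = 1 := by rw [mul_one, hu2]
  -- first field equation : r1
  have r1 : 4*ax + 4*px = 0 := by
    have h0 := re_trace_zero _ _ him (kron_im_left 1 one_im)
    rw [hMM] at h0
    rw [main_trace, hone_v, a1, a2, a3, a4, Matrix.one_fin_two] at h0
    simp only [Matrix.of_apply, Matrix.cons_val', Matrix.cons_val_zero, Matrix.cons_val_one,
      Matrix.head_cons, Matrix.empty_val', Matrix.cons_val_fin_one, Matrix.head_fin_const] at h0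
    simp only [Complex.add_re, Complex.sub_re, Complex.neg_re, Complex.mul_re, Complex.mul_im,
      Complex.add_im, Complex.sub_im, Complex.neg_im, Complex.ofReal_re, Complex.ofReal_im,
      Complex.I_re, Complex.I_im, Complex.one_re, Complex.one_im, Complex.zero_re,
      Complex.zero_im, Complex.re_ofNat, Complex.im_ofNat] at h0
    linarith
  have r2 : 4*bx + 4*qx = 0 := by
    have h0 := re_trace_zero _ _ him (kron_im_right 1 one_im)
    rw [hMM] at h0
    rw [main_trace, hone_u, b1, b2, b3, b4, Matrix.one_fin_two] at h0
    simp only [Matrix.of_apply, Matrix.cons_val', Matrix.cons_val_zero, Matrix.cons_val_one,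
      Matrix.head_cons, Matrix.empty_val', Matrix.cons_val_fin_one, Matrix.head_fin_const] at h0
    simp only [Complex.add_re, Complex.sub_re, Complex.neg_re, Complex.mul_re, Complex.mul_im,
      Complex.add_im, Complex.sub_im, Complex.neg_im, Complex.ofReal_re, Complex.ofReal_im,
      Complex.I_re, Complex.I_im, Complex.one_re, Complex.one_im, Complex.zero_re,
      Complex.zero_im, Complex.re_ofNat, Complex.im_ofNat] at h0
    linarith
  -- realness of the conjugated field matrices
  have hN1h : (u * (σX + σZ) * uᴴ)ᴴ = u * (σX + σZ) * uᴴ := by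
    rw [Matrix.conjTranspose_mul, Matrix.conjTranspose_mul, Matrix.conjTranspose_conjTranspose,
      R_herm, mul_assoc]
  have hN2h : (v * (σX + σZ) * vᴴ)ᴴ = v * (σX + σZ) * vᴴ := by
    rw [Matrix.conjTranspose_mul, Matrix.conjTranspose_mul, Matrix.conjTranspose_conjTranspose,
      R_herm, mul_assoc]
  have hN1c : (u * (σX + σZ) * uᴴ) 1 0 = (starRingEnd ℂ) ((u * (σX + σZ) * uᴴ) 0 1) := by
    have := congrFun (congrFun hN1h 1) 0
    rw [Matrix.conjTranspose_apply] at this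
    exact this.symm
  have hN2c : (v * (σX + σZ) * vᴴ) 1 0 = (starRingEnd ℂ) ((v * (σX + σZ) * vᴴ) 0 1) := by
    have := congrFun (congrFun hN2h 1) 0
    rw [Matrix.conjTranspose_apply] at this
    exact this.symm
  have hN1im : ((u * (σX + σZ) * uᴴ) 0 1).im = 0 := by
    have t := trace_conj_swap u (σX + σZ) σY
    rw [trace2, trace2, hN1c, a1, a2, a3, a4] at t
    simp only [σY_e00, σY_e01, σY_e10, σY_e11, R_e00, R_e01, R_e10, R_e11] at t
    have h := congrArg Complex.re t
    simp only [Complex.add_re, Complex.sub_re, Complex.neg_re, Complex.mul_re, Complex.mul_im,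
      Complex.add_im, Complex.sub_im, Complex.neg_im, Complex.ofReal_re, Complex.ofReal_im,
      Complex.I_re, Complex.I_im, Complex.one_re, Complex.one_im, Complex.zero_re,
      Complex.zero_im, Complex.conj_re, Complex.conj_im] at h
    linarith [r1]
  have hN2im : ((v * (σX + σZ) * vᴴ) 0 1).im = 0 := by
    have t := trace_conj_swap v (σX + σZ) σY
    rw [trace2, trace2, hN2c, b1, b2, b3, b4] at t
    simp only [σY_e00, σY_e01, σY_e10, σY_e11, R_e00, R_e01, R_e10, R_e11] at t
    have h := congrArg Complex.re t
    simp only [Complex.add_re, Complex.sub_re, Complex.neg_re, Complex.mul_re, Complex.mul_im,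
      Complex.add_im, Complex.sub_im, Complex.neg_im, Complex.ofReal_re, Complex.ofReal_im,
      Complex.I_re, Complex.I_im, Complex.one_re, Complex.one_im, Complex.zero_re,
      Complex.zero_im, Complex.conj_re, Complex.conj_im] at h
    linarith [r2]
  have hN1real := entries_real _ hN1h hN1im
  have hN2real := entries_real _ hN2h hN2im
  have hcolv : vᴴ * (v * (σX + σZ) * vᴴ) * v = σX + σZ := by
    rw [show vᴴ * (v * (σX + σZ) * vᴴ) * v = (vᴴ * v) * ((σX + σZ) * (vᴴ * v)) from by
      simp only [mul_assoc], hv2, mul_one, one_mul]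
  have hcolu : uᴴ * (u * (σX + σZ) * uᴴ) * u = σX + σZ := by
    rw [show uᴴ * (u * (σX + σZ) * uᴴ) * u = (uᴴ * u) * ((σX + σZ) * (uᴴ * u)) from by
      simp only [mul_assoc], hu2, mul_one, one_mul]
  have r3 : -4*ax - 8*px = 0 := by
    have h0 := re_trace_zero _ _ him (kron_im_left _ hN2real)
    rw [hMM] at h0
    rw [main_trace, hcolv, a1, a2, a3, a4] at h0
    simp only [R_e00, R_e01, R_e10, R_e11] at h0
    simp only [Complex.add_re, Complex.sub_re, Complex.neg_re, Complex.mul_re, Complex.mul_im,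
      Complex.add_im, Complex.sub_im, Complex.neg_im, Complex.ofReal_re, Complex.ofReal_im,
      Complex.I_re, Complex.I_im, Complex.one_re, Complex.one_im, Complex.zero_re,
      Complex.zero_im, Complex.re_ofNat, Complex.im_ofNat] at h0
    linarith
  have r4 : -4*bx - 8*qx = 0 := by
    have h0 := re_trace_zero _ _ him (kron_im_right _ hN1real)
    rw [hMM] at h0
    rw [main_trace, hcolu, b1, b2, b3, b4] at h0
    simp only [R_e00, R_e01, R_e10, R_e11] at h0
    simp only [Complex.add_re, Complex.sub_re, Complex.neg_re, Complex.mul_re, Complex.mul_im,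
      Complex.add_im, Complex.sub_im, Complex.neg_im, Complex.ofReal_re, Complex.ofReal_im,
      Complex.I_re, Complex.I_im, Complex.one_re, Complex.one_im, Complex.zero_re,
      Complex.zero_im, Complex.re_ofNat, Complex.im_ofNat] at h0
    linarith
  have hax0 : ax = 0 := by linarith
  have hpx0 : px = 0 := by linarith
  have hbx0 : bx = 0 := by linarith
  have hqx0 : qx = 0 := by linarith
  have hpy2 : py^2 = 1 := by
    rw [hax0, hpx0] at a5; simpa using a5
  have hqy2 : qy^2 = 1 := by
    rw [hbx0, hqx0] at b5; simpa using b5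
  -- orthogonality forces fy = gy = 0
  have hfy0 : fy = 0 := by
    have o1 : Matrix.trace ((uᴴ * σY * u) * (uᴴ * σX * u)) = 0 := by
      rw [rot_trace_mul u σY σX hu1, trace_YX]
    rw [trace2, a1, a2, a3, a4, d1, d2, d3, d4] at o1
    have o1' := congrArg Complex.re o1
    simp only [Complex.add_re, Complex.sub_re, Complex.neg_re, Complex.mul_re, Complex.mul_im,
      Complex.add_im, Complex.sub_im, Complex.neg_im, Complex.ofReal_re, Complex.ofReal_im,
      Complex.I_re, Complex.I_im, Complex.one_re, Complex.one_im, Complex.zero_re,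
      Complex.zero_im, Complex.re_ofNat, Complex.im_ofNat] at o1'
    rw [hax0, hpx0] at o1'
    have key : py * fy = 0 := by ring_nf at o1' ⊢; linarith
    have h2 : fy = py * (py * fy) := by rw [← mul_assoc, ← pow_two, hpy2, one_mul]
    rw [key, mul_zero] at h2
    exact h2
  have hgy0 : gy = 0 := by
    have o1 : Matrix.trace ((vᴴ * σY * v) * (vᴴ * σX * v)) = 0 := by
      rw [rot_trace_mul v σY σX hv1, trace_YX]
    rw [trace2, b1, b2, b3, b4, e1, e2, e3, e4] at o1
    have o1' := congrArg Complex.re o1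
    simp only [Complex.add_re, Complex.sub_re, Complex.neg_re, Complex.mul_re, Complex.mul_im,
      Complex.add_im, Complex.sub_im, Complex.neg_im, Complex.ofReal_re, Complex.ofReal_im,
      Complex.I_re, Complex.I_im, Complex.one_re, Complex.one_im, Complex.zero_re,
      Complex.zero_im, Complex.re_ofNat, Complex.im_ofNat] at o1'
    rw [hbx0, hqx0] at o1'
    have key : qy * gy = 0 := by ring_nf at o1' ⊢; linarith
    have h2 : gy = qy * (qy * gy) := by rw [← mul_assoc, ← pow_two, hqy2, one_mul]
    rw [key, mul_zero] at h2
    exact h2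
  -- symmetry of the conjugated matrix
  have hs30 := congrFun (congrFun hsym ((0 : Fin 2), (0 : Fin 2))) ((1 : Fin 2), (1 : Fin 2))
  rw [Matrix.transpose_apply] at hs30
  have hs21 := congrFun (congrFun hsym ((0 : Fin 2), (1 : Fin 2))) ((1 : Fin 2), (0 : Fin 2))
  rw [Matrix.transpose_apply] at hs21
  -- the YY equation
  have T5 := main_trace u v σY σY
  rw [← hMM] at T5
  rw [trace_M_YY, hs30, hs21, a1, a2, a3, a4, b1, b2, b3, b4] at T5
  have eYY := congrArg Complex.re T5
  simp only [Complex.add_re, Complex.sub_re, Complex.neg_re, Complex.mul_re, Complex.mul_im,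
      Complex.add_im, Complex.sub_im, Complex.neg_im, Complex.ofReal_re, Complex.ofReal_im,
      Complex.I_re, Complex.I_im, Complex.one_re, Complex.one_im, Complex.zero_re,
      Complex.zero_im, Complex.re_ofNat, Complex.im_ofNat] at eYY
  rw [hax0, hpx0, hbx0, hqx0] at eYY
  -- the XX equation
  have T6 := main_trace u v σX σX
  rw [← hMM] at T6
  rw [trace_M_XX, hs30, hs21, d1, d2, d3, d4, e1, e2, e3, e4] at T6
  have eXX := congrArg Complex.re T6
  simp only [Complex.add_re, Complex.sub_re, Complex.neg_re, Complex.mul_re, Complex.mul_im,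
      Complex.add_im, Complex.sub_im, Complex.neg_im, Complex.ofReal_re, Complex.ofReal_im,
      Complex.I_re, Complex.I_im, Complex.one_re, Complex.one_im, Complex.zero_re,
      Complex.zero_im, Complex.re_ofNat, Complex.im_ofNat] at eXX
  rw [hfy0, hgy0] at eXX
  -- off-diagonal inequalities
  have hh1 := hoff ((0 : Fin 2), (0 : Fin 2)) ((1 : Fin 2), (1 : Fin 2)) (by decide)
  have hh2 := hoff ((0 : Fin 2), (1 : Fin 2)) ((1 : Fin 2), (0 : Fin 2)) (by decide)
  have d5' : cx^2 + fx^2 = 1 := by rw [hfy0] at d5; simpa using d5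
  have e5' : dx^2 + gx^2 = 1 := by rw [hgy0] at e5; simpa using e5
  have hpq : py * qy = 1 ∨ py * qy = -1 := by
    apply mul_self_eq_one_iff.mp
    calc py * qy * (py * qy) = py^2 * qy^2 := by ring
      _ = 1 := by rw [hpy2, hqy2]; norm_num
  ring_nf at eYY eXX
  have s1 : (MM ((0 : Fin 2), (1 : Fin 2)) ((1 : Fin 2), (0 : Fin 2))).re
      - (MM ((0 : Fin 2), (0 : Fin 2)) ((1 : Fin 2), (1 : Fin 2))).re = 6 * (py * qy) := by
    linarith [eYY]
  have s2 : (MM ((0 : Fin 2), (0 : Fin 2)) ((1 : Fin 2), (1 : Fin 2))).re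
      + (MM ((0 : Fin 2), (1 : Fin 2)) ((1 : Fin 2), (0 : Fin 2))).re
      = -2 * (cx * dx) - 4 * (fx * gx) := by
    linarith [eXX]
  rcases hpq with h | h <;> rw [h] at s1
  · exact key_ineq cx dx fx gx _ _ d5' e5' hh1 hh2 (by linarith) s2
  · exact key_ineq cx dx fx gx _ _ d5' e5' hh1 hh2 (by linarith) s2
end

section
/- There is no triple of 3×3 signed permutation matrices Π₁, Π₂, Π₃ such that Π_u^T β Π_v is diagonal for all three pairs (u,v) ∈ {(1,2),(2,3),(3,1)}, where β = [[0,1,0],[1,0,0],[0,0,0]]. -/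
open Matrix

/-- A signed permutation matrix: exactly one non-zero entry in each row and
column, each non-zero entry equal to ±1. -/
def IsSignedPerm (M : Matrix (Fin 3) (Fin 3) ℝ) : Prop :=
  (∀ i, ∃! j, M i j ≠ 0) ∧ (∀ j, ∃! i, M i j ≠ 0) ∧
  (∀ i j, M i j = 0 ∨ M i j = 1 ∨ M i j = -1)

lemma signedPerm_rows {M : Matrix (Fin 3) (Fin 3) ℝ} (h : IsSignedPerm M) :
    ∃ a b : Fin 3, a ≠ b ∧ M 0 a ≠ 0 ∧ M 1 b ≠ 0 ∧
      (∀ j, M 0 j ≠ 0 → j = a) ∧ (∀ j, M 1 j ≠ 0 → j = b) := by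
  obtain ⟨a, ha, ha'⟩ := h.1 0
  obtain ⟨b, hb, hb'⟩ := h.1 1
  refine ⟨a, b, ?_, ha, hb, ha', hb'⟩
  rintro rfl
  obtain ⟨i, _, hi'⟩ := h.2.1 a
  exact absurd ((hi' 0 ha).trans (hi' 1 hb).symm) (by decide)

lemma entry_eq (β P Q : Matrix (Fin 3) (Fin 3) ℝ)
    (hβ : β = !![0, 1, 0; 1, 0, 0; 0, 0, 0]) (i j : Fin 3) :
    (Pᵀ * β * Q) i j = P 1 i * Q 0 j + P 0 i * Q 1 j := by
  subst hβ
  simp [Matrix.mul_apply, Fin.sum_univ_three]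

lemma key {β P Q : Matrix (Fin 3) (Fin 3) ℝ}
    (hβ : β = !![0, 1, 0; 1, 0, 0; 0, 0, 0])
    (hP : IsSignedPerm P) (hQ : IsSignedPerm Q)
    (hD : (Pᵀ * β * Q).IsDiag)
    {aP bP aQ bQ : Fin 3}
    (haP : P 0 aP ≠ 0) (hbP : P 1 bP ≠ 0) (haQ : Q 0 aQ ≠ 0) (hbQ : Q 1 bQ ≠ 0)
    (huP0 : ∀ j, P 0 j ≠ 0 → j = aP) (huP1 : ∀ j, P 1 j ≠ 0 → j = bP)
    (huQ0 : ∀ j, Q 0 j ≠ 0 → j = aQ) (huQ1 : ∀ j, Q 1 j ≠ 0 → j = bQ)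
    (hab : aP ≠ bP) (hab' : aQ ≠ bQ) :
    aP = bQ ∧ bP = aQ := by
  constructor
  · by_contra hne
    have h0 : (Pᵀ * β * Q) aP bQ = 0 := hD hne
    rw [entry_eq β P Q hβ] at h0
    have h1 : P 1 aP = 0 := by
      by_contra h; exact hab (huP1 aP h)
    have h2 : Q 0 bQ = 0 := by
      by_contra h; exact hab' (huQ0 bQ h).symm
    rw [h1, h2] at h0
    simp at h0
    rcases h0 with h | h
    · exact haP h
    · exact hbQ h
  · by_contra hne
    have h0 : (Pᵀ * β * Q) bP aQ = 0 := hD hne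
    rw [entry_eq β P Q hβ] at h0
    have h1 : P 0 bP = 0 := by
      by_contra h; exact hab (huP0 bP h).symm
    have h2 : Q 1 aQ = 0 := by
      by_contra h; exact hab' (huQ1 aQ h)
    rw [h1, h2] at h0
    simp at h0
    rcases h0 with h | h
    · exact hbP h
    · exact haQ h

/-- For `β = [[0,1,0],[1,0,0],[0,0,0]]` (the interaction `XY + YX`
on each edge of a triangle), there is no triple of signed permutation matrices
`P₁, P₂, P₃` such that `Pᵤᵀ β Pᵥ` is diagonal for all three edges
`(1,2), (2,3), (3,1)` of the triangle. -/
theorem stmt19 (β : Matrix (Fin 3) (Fin 3) ℝ)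
    (hβ : β = !![0, 1, 0; 1, 0, 0; 0, 0, 0]) :
    ¬ ∃ P₁ P₂ P₃ : Matrix (Fin 3) (Fin 3) ℝ,
        IsSignedPerm P₁ ∧ IsSignedPerm P₂ ∧ IsSignedPerm P₃ ∧
        (P₁ᵀ * β * P₂).IsDiag ∧ (P₂ᵀ * β * P₃).IsDiag ∧ (P₃ᵀ * β * P₁).IsDiag := by
  rintro ⟨P₁, P₂, P₃, h1, h2, h3, hD12, hD23, hD31⟩
  obtain ⟨a1, b1, hab1, ha1, hb1, hu1a, hu1b⟩ := signedPerm_rows h1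
  obtain ⟨a2, b2, hab2, ha2, hb2, hu2a, hu2b⟩ := signedPerm_rows h2
  obtain ⟨a3, b3, hab3, ha3, hb3, hu3a, hu3b⟩ := signedPerm_rows h3
  obtain ⟨e12a, e12b⟩ := key hβ h1 h2 hD12 ha1 hb1 ha2 hb2 hu1a hu1b hu2a hu2b hab1 hab2
  obtain ⟨e23a, e23b⟩ := key hβ h2 h3 hD23 ha2 hb2 ha3 hb3 hu2a hu2b hu3a hu3b hab2 hab3
  obtain ⟨e31a, e31b⟩ := key hβ h3 h1 hD31 ha3 hb3 ha1 hb1 hu3a hu3b hu1a hu1b hab3 hab1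
  -- a1 = b2, b2 = a3 (from e23b: b2 = a3), a3 = b1 (e31a)
  exact hab1 (e12a.trans (e23b.trans e31a))
end
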